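/- arXiv:1702.00550 — 2 statements merged into one kernel-verified Lean document; each statement's English description precedes it below -/
import Mathlib

section
/- Let ζ = s + i·t ∈ ℂ with s ≥ 0 and t ≠ 0, write φ = arg ζ ∈ (0,2π), and set ζ̂ := −s + i·t. Then for every real x ≥ 0 one has |x − ζ̂| ≤ 2·c(φ)·|x − ζ|; equivalently, sup_{x ≥ 0} |x − ζ̂|/|x − ζ| ≤ 2·c(φ). -/
/-- The coefficient `c(φ)` of the paper. -/
noncomputable def cArg (φ : ℝ) : ℝ :=
  if (0 < φ ∧ φ < Real.pi / 2) ∨ (3 * Real.pi / 2 < φ ∧ φ < 2 * Real.pi) then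
    |Real.sin φ|⁻¹
  else 1

/-!
With `ζ = s + i t`, the reflected point is `ζ̂ = -conj ζ`. Squaring, the inequality
`|x - ζ̂| |t| ≤ 2 |ζ| |x - ζ|` becomes the polynomial identity
`4 (s² + t²) ((x - s)² + t²) - ((x + s)² + t²) t² = (2 s (x - s) - t²)² + 3 t² (x - s)² + 2 t⁴`,
valid for every real `x`. If `s > 0` then `cos φ > 0`, so `c(φ) = 1/|sin φ| = |ζ|/|t|`;
if `s = 0` then `ζ̂ = ζ` and it suffices that `c(φ) ≥ 1`.
-/

open Complex ComplexConjugate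

lemma norm_add_conj_mul_abs_im_le (ζ : ℂ) (x : ℝ) :
    ‖(x : ℂ) + conj ζ‖ * |ζ.im| ≤ 2 * ‖ζ‖ * ‖(x : ℂ) - ζ‖ := by
  refine (pow_le_pow_iff_left₀ (by positivity) (by positivity) two_ne_zero).1 ?_
  simp only [mul_pow, sq_abs, Complex.sq_norm, Complex.normSq_apply, add_re, add_im, sub_re,
    sub_im, ofReal_re, ofReal_im, conj_re, conj_im]
  nlinarith [sq_nonneg (2 * ζ.re * (x - ζ.re) - ζ.im ^ 2), sq_nonneg (ζ.im * (x - ζ.re)),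
    sq_nonneg (ζ.im ^ 2)]

lemma re_im_of_eq_norm_mul_exp {ζ : ℂ} {φ : ℝ} (h : ζ = (‖ζ‖ : ℂ) * exp (φ * I)) :
    ζ.re = ‖ζ‖ * Real.cos φ ∧ ζ.im = ‖ζ‖ * Real.sin φ := by
  constructor
  · rw [congrArg re h, re_ofReal_mul, exp_ofReal_mul_I_re]
  · rw [congrArg im h, im_ofReal_mul, exp_ofReal_mul_I_im]

lemma sin_ne_zero_of_mem_Ioo_of_ne_pi {φ : ℝ} (hφ : φ ∈ Set.Ioo 0 (2 * Real.pi))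
    (hπ : φ ≠ Real.pi) : Real.sin φ ≠ 0 := by
  have hshift : Real.sin (φ - Real.pi) = -Real.sin φ := Real.sin_sub_pi φ
  intro h
  rw [h, neg_zero, Real.sin_eq_zero_iff_of_lt_of_lt (by linarith [hφ.1]) (by linarith [hφ.2])]
    at hshift
  exact hπ (sub_eq_zero.1 hshift)

lemma one_le_cArg {φ : ℝ} (hφ : φ ∈ Set.Ioo 0 (2 * Real.pi)) : 1 ≤ cArg φ := by
  unfold cArg
  split_ifs with hreg
  · have hπ : φ ≠ Real.pi := by rintro rfl; rcases hreg with h | h <;> linarith [Real.pi_pos]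
    exact (one_le_inv₀ (abs_pos.2 (sin_ne_zero_of_mem_Ioo_of_ne_pi hφ hπ))).2
      (Real.abs_sin_le_one φ)
  · exact le_rfl

lemma cArg_eq_of_cos_pos {φ : ℝ} (hφ : φ ∈ Set.Ioo 0 (2 * Real.pi)) (hcos : 0 < Real.cos φ) :
    cArg φ = |Real.sin φ|⁻¹ := by
  refine if_pos ?_
  by_contra hreg
  have hlow : Real.pi / 2 ≤ φ := le_of_not_gt fun h ↦ hreg (Or.inl ⟨hφ.1, h⟩)
  have hhigh : φ ≤ 3 * Real.pi / 2 := le_of_not_gt fun h ↦ hreg (Or.inr ⟨h, hφ.2⟩)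
  linarith [Real.cos_nonpos_of_pi_div_two_le_of_le hlow (by linarith)]

/-- For `ζ = s + i t` with `s ≥ 0`, `t ≠ 0`, `φ = arg ζ ∈ (0, 2π)`, and `ζ̂ = −s + i t`,
every real `x ≥ 0` satisfies `|x − ζ̂| ≤ 2 c(φ) |x − ζ|`
(equivalently, `sup_{x ≥ 0} |x − ζ̂|/|x − ζ| ≤ 2 c(φ)`). -/
theorem abs_sub_reflect_le (s t : ℝ) (hs : 0 ≤ s) (ht : t ≠ 0) (φ : ℝ)
    (hφ : φ ∈ Set.Ioo (0 : ℝ) (2 * Real.pi))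
    (hζφ : (s : ℂ) + (t : ℂ) * Complex.I
      = ((‖(s : ℂ) + (t : ℂ) * Complex.I‖ : ℝ) : ℂ) * Complex.exp ((φ : ℂ) * Complex.I)) :
    ∀ x : ℝ, 0 ≤ x →
      ‖(x : ℂ) - ((-s : ℝ) + (t : ℂ) * Complex.I)‖
        ≤ 2 * cArg φ * ‖(x : ℂ) - ((s : ℂ) + (t : ℂ) * Complex.I)‖ := by
  intro x _
  set ζ : ℂ := s + t * I with hζ
  have hζre : ζ.re = s := by simp [hζ]
  have hζim : ζ.im = t := by simp [hζ]
  obtain ⟨hs_polar, ht_polar⟩ := re_im_of_eq_norm_mul_exp hζφ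
  rcases hs.eq_or_lt with rfl | hs_pos
  · have hζ_eq : (x : ℂ) - ((-0 : ℝ) + t * I) = x - ζ := by simp [hζ]
    rw [hζ_eq]
    exact le_mul_of_one_le_left (norm_nonneg _) (by linarith [one_le_cArg hφ])
  · have hcos : 0 < Real.cos φ :=
      pos_of_mul_pos_right (hs_polar ▸ hζre ▸ hs_pos) (norm_nonneg ζ)
    have hnorm : ‖ζ‖ ≠ 0 := by
      rw [norm_ne_zero_iff]; rintro h; rw [h, zero_im] at hζim; exact ht hζim.symm
    have hc : cArg φ = ‖ζ‖ / |t| := by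
      rw [cArg_eq_of_cos_pos hφ hcos, ← hζim, ht_polar, abs_mul, abs_norm,
        div_mul_cancel_left₀ hnorm]
    have hreflect : (x : ℂ) - ((-s : ℝ) + t * I) = x + conj ζ := by
      apply Complex.ext <;> simp [hζ]
    rw [hreflect, hc, mul_div_assoc', div_mul_eq_mul_div, le_div_iff₀ (abs_pos.2 ht), ← hζim]
    exact norm_add_conj_mul_abs_im_le ζ x
end

section
/- Let A be a unital C*-algebra, let f ∈ A be invertible, and let b ∈ A be such that b̃ := f*·b·f is selfadjoint with 0 ≤ b̃. Set q₀ := (f·f*)⁻¹. Then for every ζ ∈ ℂ with ζ ∉ [0,∞), writing φ = arg ζ ∈ (0,2π), the element b − ζ·q₀ is invertible in A and one has the two bounds ‖(b − ζ·q₀)⁻¹‖ ≤ ‖f‖²·c(φ)·|ζ|⁻¹ and ‖b·(b − ζ·q₀)⁻¹‖ ≤ ‖f‖·‖f⁻¹‖·c(φ). -/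
open Real in
lemma cArg_eq_inv_abs_sin_or_eq_one {φ : ℝ} (hφ : φ ∈ Set.Ioo 0 (2 * π)) :
    (cArg φ = |sin φ|⁻¹ ∧ sin φ ≠ 0) ∨ (cArg φ = 1 ∧ cos φ ≤ 0) := by
  unfold cArg
  split_ifs with h
  · refine .inl ⟨rfl, ?_⟩
    rcases h with ⟨h0, h1⟩ | ⟨h0, h1⟩
    · exact (sin_pos_of_pos_of_lt_pi h0 (by linarith [pi_pos])).ne'
    · rw [← sin_sub_two_pi]
      exact (sin_neg_of_neg_of_neg_pi_lt (by linarith) (by linarith [pi_pos])).ne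
  · push Not at h
    have hle : φ ≤ 3 * π / 2 := le_of_not_gt fun h' => (h.2 h').not_gt hφ.2
    exact .inr ⟨rfl, cos_nonpos_of_pi_div_two_le_of_le (h.1 hφ.1) (by linarith)⟩

lemma cArg_nonneg (φ : ℝ) : 0 ≤ cArg φ := by
  unfold cArg; split <;> positivity

open Complex in
lemma norm_ofReal_sub_mul_exp_sq (x r φ : ℝ) :
    ‖(x : ℂ) - r * exp (φ * I)‖ ^ 2 = x ^ 2 - 2 * x * r * Real.cos φ + r ^ 2 := by
  rw [Complex.sq_norm, normSq_apply]
  simp only [sub_re, sub_im, ofReal_re, ofReal_im, re_ofReal_mul, im_ofReal_mul,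
    exp_ofReal_mul_I_re, exp_ofReal_mul_I_im]
  linear_combination r ^ 2 * Real.sin_sq_add_cos_sq φ

open Real in
lemma sq_le_cArg_sq_mul {φ : ℝ} (hφ : φ ∈ Set.Ioo 0 (2 * π)) {x r : ℝ} (hx : 0 ≤ x)
    (hr : 0 ≤ r) : r ^ 2 ≤ cArg φ ^ 2 * (x ^ 2 - 2 * x * r * cos φ + r ^ 2) := by
  rcases cArg_eq_inv_abs_sin_or_eq_one hφ with ⟨hc, hs⟩ | ⟨hc, hcos⟩
  · rw [hc, inv_pow, sq_abs, ← div_eq_inv_mul, le_div_iff₀ (by positivity)]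
    nlinarith [sq_nonneg (x - r * cos φ), sin_sq_add_cos_sq φ]
  · rw [hc, one_pow, one_mul]
    nlinarith [mul_nonneg hx hr]

open Complex in
lemma le_cArg_mul_norm_ofReal_sub {φ : ℝ} (hφ : φ ∈ Set.Ioo 0 (2 * Real.pi)) {x r : ℝ}
    (hx : 0 ≤ x) (hr : 0 ≤ r) :
    r ≤ cArg φ * ‖(x : ℂ) - r * exp (φ * I)‖ ∧ x ≤ cArg φ * ‖(x : ℂ) - r * exp (φ * I)‖ := by
  have hc := cArg_nonneg φ
  -- the squared distance `x² - 2xr cos φ + r²` is symmetric in `x` and `r`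
  constructor <;>
  refine (pow_le_pow_iff_left₀ (by assumption) (by positivity) two_ne_zero).mp ?_ <;>
  rw [mul_pow, norm_ofReal_sub_mul_exp_sq]
  · exact sq_le_cArg_sq_mul hφ hx hr
  · linarith [sq_le_cArg_sq_mul hφ hr hx]

section Resolvent

variable {A : Type*} [CStarAlgebra A] {a : A} [IsStarNormal a] {ζ : ℂ}

lemma inverse_sub_smul_one_eq_cfc (hζ : ζ ∉ spectrum ℂ a) :
    Ring.inverse (a - ζ • 1) = cfc (fun z : ℂ => (z - ζ)⁻¹) a := by
  have hne : ∀ z ∈ spectrum ℂ a, z - ζ ≠ 0 := fun z hz =>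
    sub_ne_zero.mpr (ne_of_mem_of_not_mem hz hζ)
  rw [cfc_inv (fun z : ℂ => z - ζ) a hne, cfc_sub (fun z : ℂ => z) (fun _ : ℂ => ζ) a,
    cfc_id' ℂ a, cfc_const ζ a, Algebra.algebraMap_eq_smul_one]

lemma norm_inverse_sub_smul_one_le (hζ : ζ ∉ spectrum ℂ a) {C : ℝ} (hC : 0 ≤ C)
    (h : ∀ z ∈ spectrum ℂ a, ‖(z - ζ)⁻¹‖ ≤ C) : ‖Ring.inverse (a - ζ • 1)‖ ≤ C := by
  rw [inverse_sub_smul_one_eq_cfc hζ]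
  exact norm_cfc_le hC h

lemma norm_mul_inverse_sub_smul_one_le (hζ : ζ ∉ spectrum ℂ a) {C : ℝ} (hC : 0 ≤ C)
    (h : ∀ z ∈ spectrum ℂ a, ‖z * (z - ζ)⁻¹‖ ≤ C) : ‖a * Ring.inverse (a - ζ • 1)‖ ≤ C := by
  have hcont : ContinuousOn (fun z : ℂ => (z - ζ)⁻¹) (spectrum ℂ a) :=
    ContinuousOn.inv₀ (by fun_prop) fun z hz => sub_ne_zero.mpr (ne_of_mem_of_not_mem hz hζ)
  rw [inverse_sub_smul_one_eq_cfc hζ]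
  nth_rw 1 [← cfc_id' ℂ a]
  rw [← cfc_mul _ _ a (by fun_prop) hcont]
  exact norm_cfc_le hC h

end Resolvent

lemma exists_nonneg_ofReal_of_mem_spectrum {A : Type*} [CStarAlgebra A] [PartialOrder A]
    [StarOrderedRing A] {a : A} (ha : 0 ≤ a) {z : ℂ} (hz : z ∈ spectrum ℂ a) :
    ∃ x : ℝ, 0 ≤ x ∧ z = x :=
  have hsa := IsSelfAdjoint.of_nonneg ha
  ⟨z.re, spectrum_nonneg_of_nonneg ha (hsa.spectrumRestricts.apply_mem hz),
    (hsa.spectrumRestricts.rightInvOn hz).symm⟩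

lemma resolvent_bounds_of_nonneg {A : Type*} [CStarAlgebra A] [PartialOrder A]
    [StarOrderedRing A] {a : A} (ha : 0 ≤ a) {ζ : ℂ} {φ : ℝ}
    (hζ : ∀ x : ℝ, 0 ≤ x → ζ ≠ x) (hφ : φ ∈ Set.Ioo 0 (2 * Real.pi))
    (hζφ : ζ = ‖ζ‖ * Complex.exp (φ * Complex.I)) :
    IsUnit (a - ζ • 1) ∧ ‖Ring.inverse (a - ζ • 1)‖ ≤ cArg φ * ‖ζ‖⁻¹ ∧
      ‖a * Ring.inverse (a - ζ • 1)‖ ≤ cArg φ := by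
  have : IsStarNormal a := (IsSelfAdjoint.of_nonneg ha).isStarNormal
  have hζ0 : 0 < ‖ζ‖ := norm_pos_iff.mpr (by simpa using hζ 0 le_rfl)
  have hnotMem : ζ ∉ spectrum ℂ a := fun hζa =>
    let ⟨x, hx, hζx⟩ := exists_nonneg_ofReal_of_mem_spectrum ha hζa
    hζ x hx hζx
  have hbound : ∀ z ∈ spectrum ℂ a,
      0 < ‖z - ζ‖ ∧ ‖ζ‖ ≤ cArg φ * ‖z - ζ‖ ∧ ‖z‖ ≤ cArg φ * ‖z - ζ‖ := by
    intro z hz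
    obtain ⟨x, hx, rfl⟩ := exists_nonneg_ofReal_of_mem_spectrum ha hz
    have h := le_cArg_mul_norm_ofReal_sub hφ hx (norm_nonneg ζ)
    rw [← hζφ] at h
    refine ⟨norm_pos_iff.mpr (sub_ne_zero.mpr (ne_of_mem_of_not_mem hz hnotMem)), h.1, ?_⟩
    rw [Complex.norm_of_nonneg hx]
    exact h.2
  refine ⟨?_, norm_inverse_sub_smul_one_le hnotMem (by have := cArg_nonneg φ; positivity) ?_,
    norm_mul_inverse_sub_smul_one_le hnotMem (cArg_nonneg φ) ?_⟩
  · simpa [Algebra.algebraMap_eq_smul_one] using (spectrum.notMem_iff.mp hnotMem).neg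
  · intro z hz
    obtain ⟨hd, h, -⟩ := hbound z hz
    rw [norm_inv, ← one_div, ← div_eq_mul_inv, div_le_div_iff₀ hd hζ0]
    linarith
  · intro z hz
    obtain ⟨hd, -, h⟩ := hbound z hz
    rwa [norm_mul, norm_inv, ← div_eq_mul_inv, div_le_iff₀ hd]

lemma Ring.inverse_units_mul_mul_units {M₀ : Type*} [MonoidWithZero M₀] (v w : M₀ˣ) (c : M₀) :
    Ring.inverse (↑v * c * ↑w) = ↑w⁻¹ * Ring.inverse c * ↑v⁻¹ := by
  by_cases hc : IsUnit c
  · obtain ⟨t, rfl⟩ := hc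
    rw [← Units.val_mul, ← Units.val_mul, Ring.inverse_unit, Ring.inverse_unit]
    simp only [mul_inv_rev, Units.val_mul, mul_assoc]
  · have hvcw : ¬IsUnit (↑v * c * ↑w) := by
      rwa [Units.isUnit_mul_units, Units.isUnit_units_mul]
    rw [Ring.inverse_non_unit _ hc, Ring.inverse_non_unit _ hvcw, mul_zero, zero_mul]

lemma mul_sub_smul_one_mul {𝕜 A : Type*} [CommSemiring 𝕜] [Ring A] [Algebra 𝕜 A] (v a w : A)
    (ζ : 𝕜) : v * (a - ζ • 1) * w = v * a * w - ζ • (v * w) := by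
  rw [mul_sub, sub_mul, mul_smul_one, smul_mul_assoc]

lemma sub_smul_inverse_mul_star_eq {𝕜 A : Type*} [CommSemiring 𝕜] [Ring A] [StarRing A]
    [Algebra 𝕜 A] (u : Aˣ) (b : A) (ζ : 𝕜) :
    b - ζ • Ring.inverse ((u : A) * star (u : A))
      = ↑(star u)⁻¹ * (star (u : A) * b * u - ζ • 1) * ↑u⁻¹ := by
  rw [mul_sub_smul_one_mul, ← Units.coe_star, ← Units.val_mul, Ring.inverse_unit, mul_inv_rev,
    Units.val_mul]
  simp only [mul_assoc, Units.inv_mul_cancel_left, Units.mul_inv, mul_one]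

theorem generalized_resolvent_bounds_general {A : Type*} [CStarAlgebra A]
    [PartialOrder A] [StarOrderedRing A]
    (f b : A) (hf : IsUnit f)
    (hbnn : 0 ≤ star f * b * f)
    (ζ : ℂ) (φ : ℝ)
    (hζ : ∀ x : ℝ, 0 ≤ x → ζ ≠ (x : ℂ))
    (hφ : φ ∈ Set.Ioo (0 : ℝ) (2 * Real.pi))
    (hζφ : ζ = (‖ζ‖ : ℂ) * Complex.exp ((φ : ℂ) * Complex.I)) :
    IsUnit (b - ζ • Ring.inverse (f * star f)) ∧
      ‖Ring.inverse (b - ζ • Ring.inverse (f * star f))‖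
        ≤ ‖f‖ ^ 2 * cArg φ * (‖ζ‖)⁻¹ ∧
      ‖b * Ring.inverse (b - ζ • Ring.inverse (f * star f))‖
        ≤ ‖f‖ * ‖Ring.inverse f‖ * cArg φ := by
  obtain ⟨u, rfl⟩ := hf
  obtain ⟨hunit, hres, hmul⟩ := resolvent_bounds_of_nonneg hbnn hζ hφ hζφ
  rw [sub_smul_inverse_mul_star_eq, Ring.inverse_units_mul_mul_units, inv_inv, inv_inv]
  set a := star (u : A) * b * u
  set R := Ring.inverse (a - ζ • 1)
  have hbR : b * (↑u * R * ↑(star u)) = ↑(star u)⁻¹ * (a * R) * ↑(star u) := by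
    simp only [a, ← Units.coe_star, mul_assoc, Units.inv_mul_cancel_left]
  have hstar : ‖(↑(star u) : A)‖ = ‖(u : A)‖ := by rw [Units.coe_star, norm_star]
  have hstar_inv : ‖(↑(star u)⁻¹ : A)‖ = ‖Ring.inverse (u : A)‖ := by
    rw [Units.coe_star_inv, norm_star, Ring.inverse_unit]
  refine ⟨((star u)⁻¹.isUnit.mul hunit).mul u⁻¹.isUnit, ?_, ?_⟩
  · calc _ ≤ ‖(u : A)‖ * ‖R‖ * ‖(↑(star u) : A)‖ := norm_mul₃_le
      _ ≤ ‖(u : A)‖ * (cArg φ * ‖ζ‖⁻¹) * ‖(u : A)‖ := by rw [hstar]; gcongr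
      _ = _ := by ring
  · calc _ = ‖(↑(star u)⁻¹ : A) * (a * R) * ↑(star u)‖ := by rw [hbR]
      _ ≤ ‖(↑(star u)⁻¹ : A)‖ * ‖a * R‖ * ‖(↑(star u) : A)‖ := norm_mul₃_le
      _ ≤ ‖Ring.inverse (u : A)‖ * cArg φ * ‖(u : A)‖ := by rw [hstar_inv, hstar]; gcongr
      _ = _ := by ring

/-- In a unital C*-algebra, let `f` be invertible and let `b` be such that `b̃ = f* b f` is
selfadjoint with `0 ≤ b̃`; set `q₀ = (f f*)⁻¹`. Then for any `ζ ∈ ℂ \ [0,∞)` with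
`φ = arg ζ ∈ (0, 2π)`, the element `b − ζ q₀` is invertible and
`‖(b − ζ q₀)⁻¹‖ ≤ ‖f‖² c(φ) |ζ|⁻¹` as well as `‖b (b − ζ q₀)⁻¹‖ ≤ ‖f‖ ‖f⁻¹‖ c(φ)`. -/
theorem generalized_resolvent_bounds {A : Type*} [CStarAlgebra A]
    [PartialOrder A] [StarOrderedRing A]
    (f b : A) (hf : IsUnit f)
    (hbsa : IsSelfAdjoint (star f * b * f)) (hbnn : 0 ≤ star f * b * f)
    (ζ : ℂ) (φ : ℝ)
    (hζ : ∀ x : ℝ, 0 ≤ x → ζ ≠ (x : ℂ))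
    (hφ : φ ∈ Set.Ioo (0 : ℝ) (2 * Real.pi))
    (hζφ : ζ = (‖ζ‖ : ℂ) * Complex.exp ((φ : ℂ) * Complex.I)) :
    IsUnit (b - ζ • Ring.inverse (f * star f)) ∧
      ‖Ring.inverse (b - ζ • Ring.inverse (f * star f))‖
        ≤ ‖f‖ ^ 2 * cArg φ * (‖ζ‖)⁻¹ ∧
      ‖b * Ring.inverse (b - ζ • Ring.inverse (f * star f))‖
        ≤ ‖f‖ * ‖Ring.inverse f‖ * cArg φ :=
  generalized_resolvent_bounds_general f b hf hbnn ζ φ hζ hφ hζφ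
end
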